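/- arXiv:2107.00944 — 5 statements merged into one kernel-verified Lean document; each statement's English description precedes it below -/
import Mathlib

section
/- Let D be a commutative Noetherian ring, a ∈ D, and A = D[X,Y]/(XY - a). If P is a minimal prime of A, then P ∩ D is a minimal prime of D. -/
open MvPolynomial

/-- The commutative generalized Weyl algebra of rank 1: `A = D[X,Y]/(XY - a)`. -/
noncomputable abbrev GWA (D : Type*) [CommRing D] (a : D) : Type _ :=
  MvPolynomial (Fin 2) D ⧸ (Ideal.span {X 0 * X 1 - C a} : Ideal (MvPolynomial (Fin 2) D))

/-!
Let `q ⊆ P ∩ D` be a minimal prime of `D`; we show that every `d ∈ P ∩ D` lies in `q`.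
Modulo `q` the algebra becomes `(D/q)[X,Y]/(XY - a)`, on which `d ∉ q` acts injectively:
`XY - a` has a unit leading coefficient, so it stays a non-zero-divisor modulo the
non-zero-divisor `d` of the domain `D/q`, and the roles of `d` and `XY - a` can be swapped.
But `P` is a minimal prime over `qA`, so it consists of zero-divisors on `A/qA`.
-/

open scoped nonZeroDivisors MonomialOrder

theorem IsSMulRegular.quotient_span_singleton_swap {R : Type*} [CommRing R] {x y : R}
    (hy : IsSMulRegular (R ⧸ Ideal.span {x}) y) (hx : x ∈ R⁰) :
    IsSMulRegular (R ⧸ Ideal.span {y}) x := by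
  simp only [isSMulRegular_quotient_iff_mem_of_smul_mem, smul_eq_mul,
    Ideal.mem_span_singleton] at hy ⊢
  rintro g ⟨k, hk⟩
  obtain ⟨e, he⟩ := hy k ⟨g, hk.symm⟩
  have : x * (g - y * e) = 0 := by linear_combination hk + y * he
  rw [mul_left_mem_nonZeroDivisors_eq_zero_iff hx, sub_eq_zero] at this
  exact ⟨e, this⟩

theorem IsSMulRegular.quotient_comap {R R' : Type*} [CommRing R] [CommRing R'] (φ : R →+* R')
    {I : Ideal R'} {x : R} (hx : IsSMulRegular (R' ⧸ I) (φ x)) :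
    IsSMulRegular (R ⧸ I.comap φ) x := by
  rw [isSMulRegular_quotient_iff_mem_of_smul_mem] at hx ⊢
  intro g hg
  exact hx (φ g) (by simpa using hg)

theorem Ideal.notMem_of_mem_minimalPrimes_of_isSMulRegular {R : Type*} [CommRing R]
    {I J p : Ideal R} (hp : p ∈ I.minimalPrimes) (hIJ : I ≤ J) (hJp : J ≤ p) {x : R}
    (hx : IsSMulRegular (R ⧸ J) x) : x ∉ p := by
  refine hx.notMem_of_mem_minimalPrimes ?_
  rw [Ideal.annihilator_quotient]
  exact ⟨⟨hp.isPrime, hJp⟩, fun q hq hqp ↦ hp.2 ⟨hq.1, hIJ.trans hq.2⟩ hqp⟩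

namespace MvPolynomial

theorem X_mul_X_sub_C_mem_nonZeroDivisors {n : ℕ} {R : Type*} [CommRing R]
    (i j : Fin n) (c : R) : X i * X j - C c ∈ (MvPolynomial (Fin n) R)⁰ := by
  nontriviality R
  let m : MonomialOrder (Fin n) := MonomialOrder.lex
  have hXX : m.Monic (X i * X j : MvPolynomial (Fin n) R) := m.monic_X.mul m.monic_X
  have hdeg : m.degree (C (-c) : MvPolynomial (Fin n) R) ≺[m]
      m.degree (X i * X j : MvPolynomial (Fin n) R) := by
    rw [m.degree_C, map_zero, m.toSyn_lt_iff_ne_zero, map_ne_zero_iff _ m.toSyn.injective,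
      m.degree_mul_of_isRegular_left (by rw [m.leadingCoeff_X]; exact isRegular_one)
        (X_ne_zero j), m.degree_X, m.degree_X]
    simp
  have hf : m.Monic (X i * X j - C c) := by
    simpa [sub_eq_add_neg] using hXX.add_of_lt hdeg
  exact m.mem_nonZeroDivisors_of_leadingCoeff_mem_nonZeroDivisors
    (hf.leadingCoeff_eq_one ▸ one_mem _)

theorem isSMulRegular_C_quotient_span_X_mul_X_sub_C {n : ℕ} {S : Type*} [CommRing S]
    (i j : Fin n) (c : S) {d : S} (hd : d ∈ S⁰) :
    IsSMulRegular (MvPolynomial (Fin n) S ⧸ Ideal.span {X i * X j - C c})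
      (C d : MvPolynomial (Fin n) S) := by
  have hCd : (C d : MvPolynomial (Fin n) S) ∈ (MvPolynomial (Fin n) S)⁰ :=
    (isRegular_iff_mem_nonZeroDivisors.mpr hd).monomial.mem_nonZeroDivisors
  refine IsSMulRegular.quotient_span_singleton_swap ?_ hCd
  let ψ := map (σ := Fin n) (Ideal.Quotient.mk (Ideal.span {d}))
  have hker : RingHom.ker ψ = Ideal.span {C d} := by
    rw [ker_map, Ideal.mk_ker, Ideal.map_span, Set.image_singleton]
  rw [← hker, isSMulRegular_quotient_iff_mem_of_smul_mem]
  intro k hk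
  rw [RingHom.mem_ker, smul_eq_mul, map_mul] at hk
  rw [RingHom.mem_ker]
  refine (mul_left_mem_nonZeroDivisors_eq_zero_iff ?_).mp hk
  simpa [ψ] using X_mul_X_sub_C_mem_nonZeroDivisors i j (Ideal.Quotient.mk _ c)

theorem comap_C_mem_minimalPrimes {n : ℕ} {D : Type*} [CommRing D] (i j : Fin n) (a : D)
    {p : Ideal (MvPolynomial (Fin n) D)} (hp : p ∈ (Ideal.span {X i * X j - C a}).minimalPrimes) :
    p.comap C ∈ minimalPrimes D := by
  have := hp.isPrime
  obtain ⟨q, hq, hqp⟩ := Ideal.exists_minimalPrimes_le (J := p.comap C) bot_le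
  suffices p.comap C ≤ q by rwa [le_antisymm this hqp]
  have := hq.isPrime
  intro d hdp
  by_contra hdq
  let ψ := map (σ := Fin n) (Ideal.Quotient.mk q)
  have hψ : Function.Surjective ψ := map_surjective _ Ideal.Quotient.mk_surjective
  have hJp : ((Ideal.span {X i * X j - C a}).map ψ).comap ψ ≤ p := by
    rw [Ideal.comap_map_of_surjective' ψ hψ, ker_map, Ideal.mk_ker]
    exact sup_le hp.le (Ideal.map_le_iff_le_comap.mpr hqp)
  have hd : Ideal.Quotient.mk q d ∈ (D ⧸ q)⁰ :=
    mem_nonZeroDivisors_of_ne_zero (by rwa [ne_eq, Ideal.Quotient.eq_zero_iff_mem])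
  have hreg : IsSMulRegular
      (MvPolynomial (Fin n) D ⧸ ((Ideal.span {X i * X j - C a}).map ψ).comap ψ)
      (C d : MvPolynomial (Fin n) D) := by
    refine IsSMulRegular.quotient_comap ψ ?_
    have hf : (Ideal.span {X i * X j - C a}).map ψ =
        Ideal.span {X i * X j - C (Ideal.Quotient.mk q a)} := by
      rw [Ideal.map_span, Set.image_singleton]
      simp [ψ]
    rw [hf, map_C]
    exact isSMulRegular_C_quotient_span_X_mul_X_sub_C i j _ hd
  exact Ideal.notMem_of_mem_minimalPrimes_of_isSMulRegular hp Ideal.le_comap_map hJp hreg hdp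

end MvPolynomial

theorem gwa_comap_minimalPrime_general (D : Type*) [CommRing D] (a : D)
    (P : Ideal (GWA D a)) (hP : P ∈ minimalPrimes (GWA D a)) :
    P.comap (algebraMap D (GWA D a)) ∈ minimalPrimes D := by
  have hP' : P.comap (Ideal.Quotient.mk _) ∈ (Ideal.span {X 0 * X 1 - C a}).minimalPrimes := by
    rw [Ideal.minimalPrimes_eq_comap]
    exact ⟨P, hP, rfl⟩
  exact comap_C_mem_minimalPrimes 0 1 a hP'

/-- If `P` is a minimal prime of `A = D[X,Y]/(XY - a)` over a commutative Noetherian ring `D`,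
then `P ∩ D` is a minimal prime of `D`. -/
theorem gwa_comap_minimalPrime (D : Type*) [CommRing D] [IsNoetherianRing D] (a : D)
    (P : Ideal (GWA D a)) (hP : P ∈ minimalPrimes (GWA D a)) :
    P.comap (algebraMap D (GWA D a)) ∈ minimalPrimes D :=
  gwa_comap_minimalPrime_general D a P hP
end

section
/- Let D be a commutative Noetherian ring, a ∈ D, and A = D[X,Y]/(XY - a). If p is a minimal prime of D with a ∈ p, then the ideals (p, X) and (p, Y) of A (generated by the image of p together with X, respectively Y) are distinct minimal primes of A. -/
open MvPolynomial

/-- The image of the variable `X` in `A = D[X,Y]/(XY - a)`. -/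
noncomputable def gwaX (D : Type*) [CommRing D] (a : D) : GWA D a :=
  Ideal.Quotient.mk _ (X 0)

/-- The image of the variable `Y` in `A = D[X,Y]/(XY - a)`. -/
noncomputable def gwaY (D : Type*) [CommRing D] (a : D) : GWA D a :=
  Ideal.Quotient.mk _ (X 1)

/-!
Reducing coefficients mod `p` and sending `X ↦ 0`, `Y ↦ T` identifies `A/(p, X)` with `(D/p)[T]`,
so `(p, X)` is prime, contracts to `p` in `D`, and does not contain `Y`. If `Q ⊆ (p, X)` is prime,
then `Q ∩ D ⊆ p`, hence `Q ∩ D = p` by minimality of `p`; so `XY = a ∈ Q`, and as `Y ∉ (p, X) ⊇ Q` we get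
`X ∈ Q`, i.e. `(p, X) ⊆ Q`. The same holds with `X` and `Y` exchanged, and `Y` separates the two.
-/

theorem Ideal.span_algebraMap_image_union_mem_minimalPrimes {D A : Type*} [CommRing D]
    [CommRing A] [Algebra D A] {p : Ideal D} (hp : p ∈ minimalPrimes D) {a : D} (ha : a ∈ p)
    {x y : A} (hxy : x * y = algebraMap D A a)
    (hprime : (Ideal.span (algebraMap D A '' p ∪ {x})).IsPrime)
    (hcomap : (Ideal.span (algebraMap D A '' p ∪ {x})).comap (algebraMap D A) ≤ p)
    (hy : y ∉ Ideal.span (algebraMap D A '' p ∪ {x})) :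
    Ideal.span (algebraMap D A '' p ∪ {x}) ∈ minimalPrimes A := by
  refine ⟨⟨hprime, bot_le⟩, fun Q ⟨hQ, _⟩ hQP => ?_⟩
  have hpQ : p ≤ Q.comap (algebraMap D A) :=
    hp.2 ⟨hQ.comap _, bot_le⟩ ((Ideal.comap_mono hQP).trans hcomap)
  have hxQ : x ∈ Q := by
    have hxyQ : x * y ∈ Q := hxy ▸ hpQ ha
    exact (hQ.mem_or_mem hxyQ).resolve_right fun hyQ => hy (hQP hyQ)
  rw [Ideal.span_le]
  rintro _ (⟨d, hd, rfl⟩ | rfl)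
  exacts [hpQ hd, hxQ]

section GWA

variable {D : Type*} [CommRing D] {a : D}

-- `gwaX D a` and `gwaY D a` are `gwaVar D a 0` and `gwaVar D a 1` by definition
variable (D a) in
noncomputable def gwaVar (i : Fin 2) : GWA D a :=
  Ideal.Quotient.mk _ (X i)

theorem gwaVar_mul_gwaVar {i j : Fin 2} (hij : i ≠ j) :
    gwaVar D a i * gwaVar D a j = algebraMap D (GWA D a) a := by
  have h01 : gwaVar D a 0 * gwaVar D a 1 = algebraMap D (GWA D a) a :=
    Ideal.Quotient.eq.2 (Ideal.subset_span rfl)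
  fin_cases i <;> fin_cases j
  exacts [absurd rfl hij, h01, mul_comm (gwaVar D a 0) _ ▸ h01, absurd rfl hij]

variable (p : Ideal D)

noncomputable def gwaReduce (ha : a ∈ p) (i : Fin 2) : GWA D a →+* Polynomial (D ⧸ p) :=
  Ideal.Quotient.lift _
    (eval₂Hom (Polynomial.C.comp (Ideal.Quotient.mk p)) fun k => if k = i then 0 else Polynomial.X)
    fun f hf => by
      obtain ⟨c, rfl⟩ := Ideal.mem_span_singleton'.1 hf
      fin_cases i <;> simp [Ideal.Quotient.eq_zero_iff_mem.2 ha]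

variable {i j : Fin 2}

@[simp]
theorem gwaReduce_algebraMap (ha : a ∈ p) (d : D) :
    gwaReduce p ha i (algebraMap D (GWA D a) d) = Polynomial.C (Ideal.Quotient.mk p d) :=
  eval₂_C _ _ _

@[simp]
theorem gwaReduce_gwaVar_self (ha : a ∈ p) : gwaReduce p ha i (gwaVar D a i) = 0 := by
  simp [gwaReduce, gwaVar]

theorem gwaReduce_gwaVar_of_ne (ha : a ∈ p) (hji : j ≠ i) :
    gwaReduce p ha i (gwaVar D a j) = Polynomial.X := by
  simp [gwaReduce, gwaVar, hji]

theorem ker_gwaReduce (ha : a ∈ p) (hij : i ≠ j) :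
    RingHom.ker (gwaReduce p ha i) =
      Ideal.span (algebraMap D (GWA D a) '' p ∪ {gwaVar D a i}) := by
  set P := Ideal.span (algebraMap D (GWA D a) '' p ∪ {gwaVar D a i})
  refine le_antisymm ?_ ?_
  · have hpP : ∀ d ∈ p, (Ideal.Quotient.mk P).comp (algebraMap D (GWA D a)) d = 0 :=
      fun d hd => Ideal.Quotient.eq_zero_iff_mem.2 (Ideal.subset_span (Or.inl ⟨d, hd, rfl⟩))
    -- `f ↦ f(X_j)` inverts the reduction on `A/(p, X_i)`
    let toQuot : Polynomial (D ⧸ p) →+* GWA D a ⧸ P :=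
      Polynomial.eval₂RingHom (Ideal.Quotient.lift p _ hpP) (Ideal.Quotient.mk P (gwaVar D a j))
    have hinv : toQuot.comp (gwaReduce p ha i) = Ideal.Quotient.mk P := by
      refine Ideal.Quotient.ringHom_ext (MvPolynomial.ringHom_ext (fun d => ?_) fun k => ?_)
      · change toQuot (gwaReduce p ha i (algebraMap D (GWA D a) d)) =
          Ideal.Quotient.mk P (algebraMap D (GWA D a) d)
        simp [toQuot]
      · change toQuot (gwaReduce p ha i (gwaVar D a k)) = Ideal.Quotient.mk P (gwaVar D a k)
        obtain rfl | rfl : k = i ∨ k = j := by omega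
        · have hXP : gwaVar D a k ∈ P := Ideal.subset_span (Or.inr rfl)
          simpa [toQuot] using (Ideal.Quotient.eq_zero_iff_mem.2 hXP).symm
        · simp [toQuot, gwaReduce_gwaVar_of_ne p ha hij.symm]
    intro f hf
    rw [← Ideal.Quotient.eq_zero_iff_mem, ← hinv, RingHom.comp_apply, hf, map_zero]
  · rw [Ideal.span_le]
    rintro _ (⟨d, hd, rfl⟩ | rfl)
    · simpa [Ideal.Quotient.eq_zero_iff_mem] using hd
    · exact gwaReduce_gwaVar_self p ha

theorem isPrime_span_gwaVar (ha : a ∈ p) [p.IsPrime] (hij : i ≠ j) :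
    (Ideal.span (algebraMap D (GWA D a) '' p ∪ {gwaVar D a i})).IsPrime :=
  ker_gwaReduce p ha hij ▸ RingHom.ker_isPrime _

theorem comap_span_gwaVar (ha : a ∈ p) (hij : i ≠ j) :
    (Ideal.span (algebraMap D (GWA D a) '' p ∪ {gwaVar D a i})).comap (algebraMap D (GWA D a)) =
      p := by
  ext d
  rw [← ker_gwaReduce p ha hij, Ideal.mem_comap, RingHom.mem_ker, gwaReduce_algebraMap,
    Polynomial.C_eq_zero, Ideal.Quotient.eq_zero_iff_mem]

theorem gwaVar_notMem_span (hp : p ≠ ⊤) (ha : a ∈ p) (hij : i ≠ j) :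
    gwaVar D a j ∉ Ideal.span (algebraMap D (GWA D a) '' p ∪ {gwaVar D a i}) := by
  rw [← ker_gwaReduce p ha hij, RingHom.mem_ker, gwaReduce_gwaVar_of_ne p ha hij.symm]
  have : Nontrivial (D ⧸ p) := Ideal.Quotient.nontrivial_iff.2 hp
  exact Polynomial.X_ne_zero

theorem span_gwaVar_mem_minimalPrimes (hp : p ∈ minimalPrimes D) (ha : a ∈ p) (hij : i ≠ j) :
    Ideal.span (algebraMap D (GWA D a) '' p ∪ {gwaVar D a i}) ∈ minimalPrimes (GWA D a) :=
  have : p.IsPrime := hp.1.1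
  Ideal.span_algebraMap_image_union_mem_minimalPrimes hp ha (gwaVar_mul_gwaVar hij)
    (isPrime_span_gwaVar p ha hij) (comap_span_gwaVar p ha hij).le
    (gwaVar_notMem_span p this.ne_top ha hij)

end GWA

theorem gwa_minimalPrimes_of_mem_general (D : Type*) [CommRing D] (a : D)
    (p : Ideal D) (hp : p ∈ minimalPrimes D) (ha : a ∈ p) :
    Ideal.span (algebraMap D (GWA D a) '' ↑p ∪ {gwaX D a}) ≠
      Ideal.span (algebraMap D (GWA D a) '' ↑p ∪ {gwaY D a}) ∧
    Ideal.span (algebraMap D (GWA D a) '' ↑p ∪ {gwaX D a}) ∈ minimalPrimes (GWA D a) ∧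
    Ideal.span (algebraMap D (GWA D a) '' ↑p ∪ {gwaY D a}) ∈ minimalPrimes (GWA D a) :=
  ⟨fun h => gwaVar_notMem_span p hp.1.1.ne_top ha zero_ne_one
      (h ▸ Ideal.subset_span (Or.inr rfl)),
    span_gwaVar_mem_minimalPrimes p hp ha zero_ne_one,
    span_gwaVar_mem_minimalPrimes p hp ha one_ne_zero⟩

/-- If `p` is a minimal prime of the commutative Noetherian ring `D` with `a ∈ p`,
then the ideals `(p, X)` and `(p, Y)` of `A = D[X,Y]/(XY - a)` are distinct
minimal primes of `A`. -/
theorem gwa_minimalPrimes_of_mem (D : Type*) [CommRing D] [IsNoetherianRing D] (a : D)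
    (p : Ideal D) (hp : p ∈ minimalPrimes D) (ha : a ∈ p) :
    Ideal.span (algebraMap D (GWA D a) '' ↑p ∪ {gwaX D a}) ≠
      Ideal.span (algebraMap D (GWA D a) '' ↑p ∪ {gwaY D a}) ∧
    Ideal.span (algebraMap D (GWA D a) '' ↑p ∪ {gwaX D a}) ∈ minimalPrimes (GWA D a) ∧
    Ideal.span (algebraMap D (GWA D a) '' ↑p ∪ {gwaY D a}) ∈ minimalPrimes (GWA D a) :=
  gwa_minimalPrimes_of_mem_general D a p hp ha
end

section
/- Let D be a commutative Noetherian ring, a ∈ D, and A = D[X,Y]/(XY - a). If p is a minimal prime of D with a ∉ p, then the extended ideal pA is a minimal prime of A. -/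
/-!
For any commutative ring `R` and `c : R`, sending `X ↦ T`, `Y ↦ c T⁻¹` defines a map
`R[X,Y]/(XY - c) → R[T,T⁻¹]`. Modulo `XY - c` every polynomial reduces to some `P(X) + Q(Y)`,
whose image `P(T) + Q(c T⁻¹)` has its parts in degrees `≥ 0` and `≤ 0`. If the image vanishes, `P`
is therefore constant, and after absorbing it into `Q` we get `Q(cT) = 0`. Hence the map is injective when `c` is a nonzerodivisor, and
`R[X,Y]/(XY - c)` is a domain when `R` is a domain and `c ≠ 0`.

The map `A → (D/p)[X,Y]/(XY - ā)` has kernel `pA`, and its target is a domain because `ā ≠ 0`;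
so `pA` is prime, and `pA ∩ D = p` since `D/p` embeds in the target. A prime `q ⊆ pA` contracts
to a prime inside `p`, which is `p` by minimality, so `pA ⊆ q`.
-/

open MvPolynomial

open scoped Polynomial LaurentPolynomial

section

variable {R S : Type*} [CommRing R] [CommRing S] [Algebra R S] {c : R} {x y : S}

theorem exists_aeval_add_aeval_mul_eq (hxy : x * y = algebraMap R S c) (P Q : R[X]) :
    ∃ P' Q' : R[X], (Polynomial.aeval x P + Polynomial.aeval y Q) * x =
      Polynomial.aeval x P' + Polynomial.aeval y Q' := by
  refine ⟨(P + Polynomial.C (Q.coeff 0)) * Polynomial.X, Polynomial.C c * Q.divX, ?_⟩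
  conv_lhs => rw [← Q.X_mul_divX_add]
  simp only [map_add, map_mul, Polynomial.aeval_X, Polynomial.aeval_C]
  linear_combination (Polynomial.aeval y Q.divX) * hxy

theorem exists_aeval_eq_aeval_add_aeval (hxy : x * y = algebraMap R S c)
    (g : MvPolynomial (Fin 2) R) :
    ∃ P Q : R[X], aeval ![x, y] g = Polynomial.aeval x P + Polynomial.aeval y Q := by
  induction g using MvPolynomial.induction_on with
  | C r => exact ⟨Polynomial.C r, 0, by simp⟩
  | add g h ihg ihh =>
    obtain ⟨P, Q, hg⟩ := ihg
    obtain ⟨P', Q', hh⟩ := ihh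
    exact ⟨P + P', Q + Q', by simp only [map_add, hg, hh]; ring⟩
  | mul_X g i ih =>
    obtain ⟨P, Q, hg⟩ := ih
    rw [map_mul, aeval_X, hg]
    fin_cases i
    · exact exists_aeval_add_aeval_mul_eq hxy P Q
    · obtain ⟨Q', P', h⟩ := exists_aeval_add_aeval_mul_eq ((mul_comm y x).trans hxy) Q P
      refine ⟨P', Q', ?_⟩
      rw [add_comm, add_comm (Polynomial.aeval x P')]
      exact h

end

namespace Polynomial

variable {R : Type*} [CommSemiring R]

theorem coeff_toLaurent_natCast (P : R[X]) (n : ℕ) : (toLaurent P).coeff n = P.coeff n := by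
  rw [LaurentPolynomial.coeff_toLaurent]
  exact Finsupp.mapDomain_apply Nat.castEmbedding.injective P.toFinsupp.coeff n

theorem coeff_toLaurent_of_neg (P : R[X]) {n : ℤ} (hn : n < 0) : (toLaurent P).coeff n = 0 := by
  rw [LaurentPolynomial.coeff_toLaurent, Finsupp.mapDomain_of_notMem_range]
  rintro ⟨m, rfl⟩
  exact (Int.natCast_nonneg m).not_gt hn

theorem eq_C_of_toLaurent_eq_invert {P Q : R[X]}
    (h : toLaurent P = LaurentPolynomial.invert (toLaurent Q)) : P = C (P.coeff 0) := by
  ext (_ | n)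
  · simp
  · rw [coeff_C_succ, ← coeff_toLaurent_natCast, h, LaurentPolynomial.invert_apply,
      coeff_toLaurent_of_neg _ (by omega)]

end Polynomial

namespace GWA

variable {R : Type*} [CommRing R] (c : R)

noncomputable def x : GWA R c := Ideal.Quotient.mk _ (X 0)

noncomputable def y : GWA R c := Ideal.Quotient.mk _ (X 1)

theorem x_mul_y : x c * y c = algebraMap R (GWA R c) c := by
  change Ideal.Quotient.mk _ (X 0) * Ideal.Quotient.mk _ (X 1) = Ideal.Quotient.mk _ (C c)
  rw [← map_mul, Ideal.Quotient.eq]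
  exact Ideal.subset_span rfl

theorem mk_eq_aeval (g : MvPolynomial (Fin 2) R) :
    Ideal.Quotient.mk _ g = aeval ![x c, y c] g := by
  rw [← Ideal.Quotient.mkₐ_eq_mk R, MvPolynomial.aeval_unique (Ideal.Quotient.mkₐ R _)]
  congr 2
  ext i
  fin_cases i <;> rfl

theorem exists_eq_aeval_add_aeval (z : GWA R c) :
    ∃ P Q : R[X], z = Polynomial.aeval (x c) P + Polynomial.aeval (y c) Q := by
  obtain ⟨g, rfl⟩ := Ideal.Quotient.mk_surjective z
  rw [mk_eq_aeval]
  exact exists_aeval_eq_aeval_add_aeval (x_mul_y c) g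

open LaurentPolynomial (T invert)

noncomputable def toLaurent : GWA R c →ₐ[R] R[T;T⁻¹] :=
  Ideal.Quotient.liftₐ _ (aeval ![T 1, LaurentPolynomial.C c * T (-1)]) fun g hg => by
    obtain ⟨h, rfl⟩ := Ideal.mem_span_singleton'.mp hg
    have hT : (T 1 * T (-1) : R[T;T⁻¹]) = 1 := by
      rw [← LaurentPolynomial.T_add, add_neg_cancel, LaurentPolynomial.T_zero]
    simp only [map_mul, map_sub, aeval_X, aeval_C, Matrix.cons_val_zero, Matrix.cons_val_one,
      Matrix.cons_val_fin_one, mul_left_comm (T 1 : R[T;T⁻¹]), hT, mul_one,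
      ← LaurentPolynomial.C_eq_algebraMap, sub_self, mul_zero]

@[simp]
theorem toLaurent_x : toLaurent c (x c) = T 1 :=
  aeval_X _ 0

@[simp]
theorem toLaurent_y : toLaurent c (y c) = LaurentPolynomial.C c * T (-1) :=
  aeval_X _ 1

theorem toLaurent_aeval_x (P : R[X]) : toLaurent c (Polynomial.aeval (x c) P) = P.toLaurent := by
  rw [← Polynomial.aeval_algHom_apply, toLaurent_x, ← Polynomial.toLaurent_X,
    ← Polynomial.coe_toLaurentAlg, Polynomial.aeval_algHom_apply, Polynomial.aeval_X_left_apply]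

theorem toLaurent_aeval_y (Q : R[X]) : toLaurent c (Polynomial.aeval (y c) Q) =
    invert (Q.comp (Polynomial.C c * Polynomial.X)).toLaurent := by
  rw [← Polynomial.aeval_algHom_apply, toLaurent_y, Polynomial.comp_eq_aeval,
    ← Polynomial.coe_toLaurentAlg, ← AlgEquiv.coe_toAlgHom, ← AlgHom.comp_apply,
    ← Polynomial.aeval_algHom_apply]
  simp

theorem toLaurent_injective (hc : c ∈ nonZeroDivisors R) : Function.Injective (toLaurent c) := by
  refine (injective_iff_map_eq_zero _).mpr fun z hz => ?_
  obtain ⟨P, Q, rfl⟩ := exists_eq_aeval_add_aeval c z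
  have hP : P = Polynomial.C (P.coeff 0) := by
    rw [map_add, toLaurent_aeval_x, toLaurent_aeval_y, add_eq_zero_iff_eq_neg, ← map_neg,
      ← map_neg] at hz
    exact Polynomial.eq_C_of_toLaurent_eq_invert hz
  have hz' : Polynomial.aeval (x c) P + Polynomial.aeval (y c) Q =
      Polynomial.aeval (y c) (Q + Polynomial.C (P.coeff 0)) := by
    conv_lhs => rw [hP]
    rw [map_add, Polynomial.aeval_C, Polynomial.aeval_C, add_comm]
  rw [hz', toLaurent_aeval_y, map_eq_zero_iff _ invert.injective, Polynomial.toLaurent_eq_zero,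
    Polynomial.comp_C_mul_X_eq_zero_iff hc] at hz
  rw [hz', hz, map_zero]

theorem isDomain [IsDomain R] (hc : c ≠ 0) : IsDomain (GWA R c) :=
  (toLaurent_injective c (mem_nonZeroDivisors_of_ne_zero hc)).isDomain (toLaurent c).toRingHom

theorem algebraMap_injective : Function.Injective (algebraMap R (GWA R c)) := by
  refine .of_comp (f := toLaurent c) ?_
  rw [← AlgHom.coe_toRingHom, ← RingHom.coe_comp, AlgHom.comp_algebraMap]
  intro r s h
  simpa using congr_arg (·.coeff 0) h

section map

variable {S : Type*} [CommRing S] (f : R →+* S)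

theorem map_span_X_mul_X_sub_C :
    (Ideal.span {X 0 * X 1 - C c} : Ideal (MvPolynomial (Fin 2) R)).map (MvPolynomial.map f) =
      Ideal.span {X 0 * X 1 - C (f c)} := by
  rw [Ideal.map_span, Set.image_singleton]
  simp

noncomputable def map : GWA R c →+* GWA S (f c) :=
  Ideal.quotientMap _ (MvPolynomial.map f)
    (Ideal.map_le_iff_le_comap.mp (map_span_X_mul_X_sub_C c f).le)

theorem map_comp_algebraMap :
    (map c f).comp (algebraMap R (GWA R c)) = (algebraMap S (GWA S (f c))).comp f := by
  ext r
  exact congrArg (Ideal.Quotient.mk _) (MvPolynomial.map_C f r)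

theorem ker_map (hf : Function.Surjective f) :
    RingHom.ker (map c f) = (RingHom.ker f).map (algebraMap R (GWA R c)) := by
  rw [← Ideal.map_comap_of_surjective _ Ideal.Quotient.mk_surjective (RingHom.ker (map c f)),
    RingHom.comap_ker, map, Ideal.quotientMap_comp_mk, ← RingHom.comap_ker, Ideal.mk_ker,
    ← map_span_X_mul_X_sub_C, Ideal.comap_map_of_surjective _ (MvPolynomial.map_surjective f hf),
    ← RingHom.ker_eq_comap_bot, MvPolynomial.ker_map, Ideal.map_sup, Ideal.map_quotient_self,
    bot_sup_eq, Ideal.map_map]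
  rfl

end map

end GWA

theorem Ideal.map_mem_minimalPrimes_of_comap_le {R S : Type*} [CommSemiring R] [CommSemiring S]
    (f : R →+* S) {p : Ideal R} (hp : p ∈ minimalPrimes R) [(p.map f).IsPrime]
    (h : (p.map f).comap f ≤ p) : p.map f ∈ minimalPrimes S := by
  refine ⟨⟨‹_›, bot_le⟩, fun q hq hqp => Ideal.map_le_iff_le_comap.mpr ?_⟩
  have := hq.1
  exact hp.2 ⟨Ideal.comap_isPrime f q, bot_le⟩ ((Ideal.comap_mono hqp).trans h)

theorem gwa_map_minimalPrime_of_not_mem_general (D : Type*) [CommRing D] (a : D)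
    (p : Ideal D) (hp : p ∈ minimalPrimes D) (ha : a ∉ p) :
    p.map (algebraMap D (GWA D a)) ∈ minimalPrimes (GWA D a) := by
  have : p.IsPrime := hp.1.1
  have := GWA.isDomain _ (mt (Ideal.Quotient.eq_zero_iff_mem (I := p)).mp ha)
  have hker : RingHom.ker (GWA.map a (Ideal.Quotient.mk p)) = p.map (algebraMap D (GWA D a)) := by
    rw [GWA.ker_map _ _ Ideal.Quotient.mk_surjective, Ideal.mk_ker]
  have : (p.map (algebraMap D (GWA D a))).IsPrime := hker ▸ RingHom.ker_isPrime _
  refine Ideal.map_mem_minimalPrimes_of_comap_le _ hp ?_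
  rw [← hker, RingHom.comap_ker, GWA.map_comp_algebraMap,
    RingHom.ker_comp_of_injective _ (GWA.algebraMap_injective _), Ideal.mk_ker]

/-- If `p` is a minimal prime of the commutative Noetherian ring `D` with `a ∉ p`,
then the extended ideal `pA` is a minimal prime of `A = D[X,Y]/(XY - a)`. -/
theorem gwa_map_minimalPrime_of_not_mem (D : Type*) [CommRing D] [IsNoetherianRing D] (a : D)
    (p : Ideal D) (hp : p ∈ minimalPrimes D) (ha : a ∉ p) :
    p.map (algebraMap D (GWA D a)) ∈ minimalPrimes (GWA D a) :=
  gwa_map_minimalPrime_of_not_mem_general D a p hp ha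
end

section
/- Let D be a commutative Noetherian ring, a ∈ D, p a minimal prime of D with a ∈ p, and A = D[X,Y]/(XY - a). Then pA = (p, X) ∩ (p, Y), so pA is a semiprime (radical) ideal of A. -/
open MvPolynomial

/-!
Work in `R = D[X,Y]` and let `φ : R → (D/p)[X,Y]` reduce coefficients mod `p`, so `ker φ = pR`.
The ideals `(p, X)` and `(p, Y)` of `R` are the preimages of `(X)` and `(Y)`, hence prime because
`D/p` is a domain, and their intersection is the preimage of `(X) ∩ (Y) = (XY)`, i.e.
`pR + (XY) = pR + (XY - a)` as `a ∈ p`. All these ideals contain `XY - a`, so the equality passes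
to `A`, where `pA` becomes an intersection of two primes.
-/

namespace Ideal

theorem span_singleton_inf_span_singleton_of_prime {R : Type*} [CommSemiring R] {x q : R}
    (hq : Prime q) (hx : ¬ q ∣ x) : span {x} ⊓ span {q} = span {x * q} := by
  ext f
  simp only [mem_inf, mem_span_singleton]
  constructor
  · rintro ⟨⟨g, rfl⟩, hqf⟩
    obtain ⟨h, rfl⟩ := (hq.dvd_or_dvd hqf).resolve_left hx
    exact ⟨h, by ring⟩
  · rintro ⟨g, rfl⟩
    exact ⟨⟨q * g, by ring⟩, ⟨x * g, by ring⟩⟩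

theorem comap_span_singleton_of_surjective {R S : Type*} [CommRing R] [CommRing S]
    {f : R →+* S} (hf : Function.Surjective f) (x : R) :
    comap f (span {f x}) = span {x} ⊔ RingHom.ker f := by
  rw [← Set.image_singleton, ← map_span, comap_map_of_surjective' f hf]

theorem span_singleton_sub_sup_of_mem {R : Type*} [CommRing R] {I : Ideal R} (x : R) {y : R}
    (hy : y ∈ I) : span {x - y} ⊔ I = span {x} ⊔ I := by
  refine le_antisymm (sup_le ?_ le_sup_right) (sup_le ?_ le_sup_right) <;>
    rw [span_le, Set.singleton_subset_iff]
  · exact sub_mem (mem_sup_left (mem_span_singleton_self x)) (mem_sup_right hy)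
  · simpa using add_mem (mem_sup_left (mem_span_singleton_self (x - y))) (mem_sup_right hy)

end Ideal

namespace MvPolynomial

variable {σ D : Type*} [CommRing D]

theorem span_X_inf_span_X {k : Type*} [CommRing k] [IsDomain k] {i j : σ} (hij : i ≠ j) :
    Ideal.span {(X i : MvPolynomial σ k)} ⊓ Ideal.span {X j} = Ideal.span {X i * X j} :=
  Ideal.span_singleton_inf_span_singleton_of_prime X_prime (by simpa using hij.symm)

theorem comap_map_mk_span_singleton (p : Ideal D) (f : MvPolynomial σ D) :
    Ideal.comap (map (Ideal.Quotient.mk p)) (Ideal.span {map (Ideal.Quotient.mk p) f}) =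
      Ideal.span {f} ⊔ p.map C := by
  rw [Ideal.comap_span_singleton_of_surjective (map_surjective _ Ideal.Quotient.mk_surjective),
    ker_map, Ideal.mk_ker]

theorem span_X_sup_map_C_eq_comap (p : Ideal D) (i : σ) :
    Ideal.span {X i} ⊔ p.map C =
      Ideal.comap (map (Ideal.Quotient.mk p)) (Ideal.span {(X i : MvPolynomial σ (D ⧸ p))}) := by
  rw [← comap_map_mk_span_singleton, map_X]

theorem isPrime_span_X_sup_map_C (p : Ideal D) [p.IsPrime] (i : σ) :
    (Ideal.span {X i} ⊔ p.map C : Ideal (MvPolynomial σ D)).IsPrime := by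
  rw [span_X_sup_map_C_eq_comap]
  have : (Ideal.span {(X i : MvPolynomial σ (D ⧸ p))}).IsPrime :=
    (Ideal.span_singleton_prime (X_ne_zero i)).mpr X_prime
  exact this.comap _

theorem span_X_sup_map_C_inf (p : Ideal D) [p.IsPrime] {i j : σ} (hij : i ≠ j) :
    (Ideal.span {X i} ⊔ p.map C) ⊓ (Ideal.span {X j} ⊔ p.map C) =
      (Ideal.span {X i * X j} ⊔ p.map C : Ideal (MvPolynomial σ D)) := by
  rw [span_X_sup_map_C_eq_comap, span_X_sup_map_C_eq_comap, ← Ideal.comap_inf,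
    span_X_inf_span_X hij, ← comap_map_mk_span_singleton, map_mul, map_X, map_X]

end MvPolynomial

namespace GWA

variable {D : Type*} [CommRing D] {a : D} {p : Ideal D}

theorem span_X_mul_X_sub_C_le_span_X_sup_map_C (ha : a ∈ p) (i : Fin 2) :
    Ideal.span {X 0 * X 1 - C a} ≤
      (Ideal.span {X i} ⊔ p.map C : Ideal (MvPolynomial (Fin 2) D)) := by
  have hXY : (X 0 * X 1 : MvPolynomial (Fin 2) D) ∈ Ideal.span {X i} := by
    rw [Ideal.mem_span_singleton]
    fin_cases i
    exacts [dvd_mul_right _ _, dvd_mul_left _ _]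
  rw [Ideal.span_le, Set.singleton_subset_iff]
  exact sub_mem (Ideal.mem_sup_left hXY) (Ideal.mem_sup_right (Ideal.mem_map_of_mem C ha))

theorem map_algebraMap :
    p.map (algebraMap D (GWA D a)) = (p.map C).map (Ideal.Quotient.mk _) := by
  rw [Ideal.map_map]
  rfl

theorem span_image_union_singleton (i : Fin 2) :
    Ideal.span (algebraMap D (GWA D a) '' p ∪ {Ideal.Quotient.mk _ (X i)}) =
      (Ideal.span {X i} ⊔ p.map C).map (Ideal.Quotient.mk _) := by
  rw [Ideal.span_union, ← Ideal.map_span, Ideal.span_eq, map_algebraMap, Ideal.map_sup,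
    Ideal.map_span, Set.image_singleton, sup_comm]

theorem isPrime_span_image_union_singleton [p.IsPrime] (ha : a ∈ p) (i : Fin 2) :
    (Ideal.span (algebraMap D (GWA D a) '' p ∪ {Ideal.Quotient.mk _ (X i)})).IsPrime := by
  rw [span_image_union_singleton]
  exact Ideal.map_isPrime_of_surjective Ideal.Quotient.mk_surjective
    (H := MvPolynomial.isPrime_span_X_sup_map_C p i)
    (by rw [Ideal.mk_ker]; exact span_X_mul_X_sub_C_le_span_X_sup_map_C ha i)

end GWA

theorem gwa_map_eq_inf_general (D : Type*) [CommRing D] (a : D)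
    (p : Ideal D) (hp : p ∈ minimalPrimes D) (ha : a ∈ p) :
    p.map (algebraMap D (GWA D a)) =
      Ideal.span (algebraMap D (GWA D a) '' ↑p ∪ {gwaX D a}) ⊓
      Ideal.span (algebraMap D (GWA D a) '' ↑p ∪ {gwaY D a}) ∧
    (p.map (algebraMap D (GWA D a))).IsRadical := by
  have : p.IsPrime := hp.1.1
  have hle := GWA.span_X_mul_X_sub_C_le_span_X_sup_map_C ha
  have hinf : p.map (algebraMap D (GWA D a)) =
      Ideal.span (algebraMap D (GWA D a) '' ↑p ∪ {gwaX D a}) ⊓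
      Ideal.span (algebraMap D (GWA D a) '' ↑p ∪ {gwaY D a}) := by
    rw [gwaX, gwaY, GWA.span_image_union_singleton, GWA.span_image_union_singleton,
      ← Ideal.map_inf_comap_of_surjective _ Ideal.Quotient.mk_surjective,
      Ideal.comap_map_mk (hle 0), Ideal.comap_map_mk (hle 1),
      MvPolynomial.span_X_sup_map_C_inf p (by decide),
      ← Ideal.span_singleton_sub_sup_of_mem _ (Ideal.mem_map_of_mem C ha), Ideal.map_sup,
      Ideal.map_quotient_self, bot_sup_eq, GWA.map_algebraMap]
  refine ⟨hinf, ?_⟩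
  rw [hinf]
  exact (GWA.isPrime_span_image_union_singleton ha 0).isRadical.inf
    (GWA.isPrime_span_image_union_singleton ha 1).isRadical

/-- If `p` is a minimal prime of the commutative Noetherian ring `D` with `a ∈ p`, then
in `A = D[X,Y]/(XY - a)` we have `pA = (p, X) ∩ (p, Y)`; in particular, `pA` is a
semiprime (radical) ideal of `A`. -/
theorem gwa_map_eq_inf (D : Type*) [CommRing D] [IsNoetherianRing D] (a : D)
    (p : Ideal D) (hp : p ∈ minimalPrimes D) (ha : a ∈ p) :
    p.map (algebraMap D (GWA D a)) =
      Ideal.span (algebraMap D (GWA D a) '' ↑p ∪ {gwaX D a}) ⊓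
      Ideal.span (algebraMap D (GWA D a) '' ↑p ∪ {gwaY D a}) ∧
    (p.map (algebraMap D (GWA D a))).IsRadical :=
  gwa_map_eq_inf_general D a p hp ha
end

section
/- Let D be a commutative ring with trivial Poisson bracket, and let ∂ be a derivation of D and a ∈ D with ∂(a) defined. On A = D[X,Y]/(XY - a), the rule {Y,d} = ∂(d)Y, {X,d} = -∂(d)X for d ∈ D, and {Y,X} = ∂(a), extends to a well-defined Poisson bracket on A (i.e., a Lie bracket satisfying the Leibniz rule) making A a Poisson algebra. -/
open MvPolynomial

/-!
On `D[X,Y]` the prescribed values determine a biderivation,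
`{f,g} = ∂a (f_Y g_X - f_X g_Y) + ∂f (X g_X - Y g_Y) - (X f_X - Y f_Y) ∂g`,
where `∂` acts on coefficients. It is antisymmetric, and the Jacobi identity becomes a polynomial
identity once one knows that `∂` and the partial derivatives pairwise commute.
The element `XY - a` is a Casimir, `{f, XY - a} = 0`, so by the Leibniz rule the ideal it
generates is a Poisson ideal and the bracket descends to `D[X,Y]/(XY - a)`.
-/

namespace Derivation

variable {σ A : Type*} [CommRing A] (d : Derivation ℤ A A)

noncomputable def mvMapCoeffs : Derivation ℤ (MvPolynomial σ A) (MvPolynomial σ A) :=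
  let E : MvPolynomial σ A →+ MvPolynomial σ A :=
    AddMonoidAlgebra.coeffAddEquiv.symm.toAddMonoidHom.comp
      ((Finsupp.mapRange.addMonoidHom d.toAddMonoidHom).comp
        AddMonoidAlgebra.coeffAddEquiv.toAddMonoidHom)
  have coeff_E (m : σ →₀ ℕ) (f : MvPolynomial σ A) : coeff m (E f) = d (coeff m f) := rfl
  { E.toIntLinearMap with
    map_one_eq_zero' := by
      classical
      ext m
      simp [coeff_E, coeff_one, apply_ite d]
    leibniz' := fun f g => by
      classical
      ext m
      simp only [AddMonoidHom.coe_toIntLinearMap, smul_eq_mul, coeff_add, mul_comm g, coeff_mul,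
        coeff_E, map_sum, leibniz, ← Finset.sum_add_distrib]
      exact Finset.sum_congr rfl fun _ _ => by ring }

@[simp]
theorem coeff_mvMapCoeffs (m : σ →₀ ℕ) (f : MvPolynomial σ A) :
    coeff m (d.mvMapCoeffs f) = d (coeff m f) := rfl

@[simp]
theorem mvMapCoeffs_C (c : A) : d.mvMapCoeffs (C c : MvPolynomial σ A) = C (d c) := by
  classical
  ext m
  simp [coeff_C, apply_ite d]

@[simp]
theorem mvMapCoeffs_X (i : σ) : d.mvMapCoeffs (X i : MvPolynomial σ A) = 0 := by
  classical
  ext m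
  simp [coeff_X, apply_ite d]

theorem pderiv_mvMapCoeffs (i : σ) (f : MvPolynomial σ A) :
    pderiv i (d.mvMapCoeffs f) = d.mvMapCoeffs (pderiv i f) := by
  ext m
  simp [coeff_pderiv, leibniz, mul_comm]

end Derivation

theorem MvPolynomial.pderiv_comm {σ R : Type*} [CommRing R] (i j : σ) (f : MvPolynomial σ R) :
    pderiv i (pderiv j f) = pderiv j (pderiv i f) := by
  classical
  -- the commutator of two partial derivatives is a derivation vanishing on the variables
  have : ⁅pderiv i, pderiv j⁆ = (0 : Derivation R (MvPolynomial σ R) (MvPolynomial σ R)) :=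
    derivation_ext fun k => by
      rw [Derivation.commutator_apply]
      simp [pderiv_X, Pi.single_apply, apply_ite (pderiv _)]
  rw [← sub_eq_zero, ← Derivation.commutator_apply, this, Derivation.zero_apply]

structure IsPoissonBracket {A : Type*} [CommRing A] (B : A → A → A) : Prop where
  add_left (u v w : A) : B (u + v) w = B u w + B v w
  add_right (u v w : A) : B u (v + w) = B u v + B u w
  antisymm (u v : A) : B u v = -B v u
  jacobi (u v w : A) : B u (B v w) = B (B u v) w + B v (B u w)
  leibniz (u v w : A) : B u (v * w) = B u v * w + v * B u w

namespace IsPoissonBracket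

variable {A : Type*} [CommRing A] {B : A → A → A}

theorem sub_left (hB : IsPoissonBracket B) (u v w : A) : B (u - v) w = B u w - B v w :=
  map_sub (AddMonoidHom.mk' (B · w) (hB.add_left · · w)) u v

theorem sub_right (hB : IsPoissonBracket B) (u v w : A) : B u (v - w) = B u v - B u w :=
  map_sub (AddMonoidHom.mk' (B u) (hB.add_right u)) v w

theorem mem_span_singleton_of_casimir (hB : IsPoissonBracket B) {r : A} (hr : ∀ u, B u r = 0)
    (u : A) {v : A} (hv : v ∈ Ideal.span {r}) : B u v ∈ Ideal.span {r} := by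
  obtain ⟨w, rfl⟩ := Ideal.mem_span_singleton'.mp hv
  rw [hB.leibniz, hr, mul_zero, add_zero]
  exact Ideal.mul_mem_left _ _ (Ideal.mem_span_singleton_self r)

def quotient (hB : IsPoissonBracket B) (I : Ideal A) (hI : ∀ u, ∀ v ∈ I, B u v ∈ I) :
    A ⧸ I → A ⧸ I → A ⧸ I :=
  fun x y => Quotient.liftOn₂' x y (fun u v => Ideal.Quotient.mk I (B u v))
    fun u₁ v₁ u₂ v₂ hu hv => by
      rw [Ideal.Quotient.eq]
      have hu' : u₁ - u₂ ∈ I := (Submodule.quotientRel_def I).mp hu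
      have hv' : v₁ - v₂ ∈ I := (Submodule.quotientRel_def I).mp hv
      have split : B u₁ v₁ - B u₂ v₂ = -B v₁ (u₁ - u₂) + B u₂ (v₁ - v₂) := by
        rw [← hB.antisymm, hB.sub_left, hB.sub_right]; ring
      rw [split]
      exact I.add_mem (I.neg_mem (hI _ _ hu')) (hI _ _ hv')

variable (hB : IsPoissonBracket B) {I : Ideal A} (hI : ∀ u, ∀ v ∈ I, B u v ∈ I)

theorem quotient_mk (u v : A) :
    hB.quotient I hI (Ideal.Quotient.mk I u) (Ideal.Quotient.mk I v) =
      Ideal.Quotient.mk I (B u v) :=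
  rfl

theorem isPoissonBracket_quotient : IsPoissonBracket (hB.quotient I hI) := by
  have surj := Ideal.Quotient.mk_surjective (I := I)
  constructor
  · exact surj.forall₃.2 fun u v w => by simp only [← map_add, quotient_mk, hB.add_left]
  · exact surj.forall₃.2 fun u v w => by simp only [← map_add, quotient_mk, hB.add_right]
  · exact surj.forall₂.2 fun u v => by simp only [← map_neg, quotient_mk, hB.antisymm u v]
  · exact surj.forall₃.2 fun u v w => by simp only [quotient_mk, hB.jacobi u v w, map_add]
  · exact surj.forall₃.2 fun u v w => by
      simp only [← map_add, ← map_mul, quotient_mk, hB.leibniz]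

end IsPoissonBracket

section WeylPoissonBracket

variable {D : Type*} [CommRing D] (del : Derivation ℤ D D) (a : D)

noncomputable def weylPoissonBracket (f g : MvPolynomial (Fin 2) D) : MvPolynomial (Fin 2) D :=
  C (del a) * (pderiv 1 f * pderiv 0 g - pderiv 0 f * pderiv 1 g)
    + del.mvMapCoeffs f * (X 0 * pderiv 0 g - X 1 * pderiv 1 g)
    - (X 0 * pderiv 0 f - X 1 * pderiv 1 f) * del.mvMapCoeffs g

theorem isPoissonBracket_weylPoissonBracket : IsPoissonBracket (weylPoissonBracket del a) where
  add_left _ _ _ := by simp only [weylPoissonBracket, map_add]; ring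
  add_right _ _ _ := by simp only [weylPoissonBracket, map_add]; ring
  antisymm _ _ := by simp only [weylPoissonBracket]; ring
  jacobi _ _ _ := by
    simp only [weylPoissonBracket, map_sub, map_add, Derivation.leibniz, smul_eq_mul, pderiv_C,
      Derivation.mvMapCoeffs_C, Derivation.mvMapCoeffs_X, pderiv_X_self,
      Derivation.pderiv_mvMapCoeffs, pderiv_comm (0 : Fin 2) 1]
    ring
  leibniz _ _ _ := by
    simp only [weylPoissonBracket, Derivation.leibniz, smul_eq_mul]; ring

theorem weylPoissonBracket_casimir (f : MvPolynomial (Fin 2) D) :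
    weylPoissonBracket del a f (X 0 * X 1 - C a) = 0 := by
  simp only [weylPoissonBracket, map_sub, Derivation.leibniz, smul_eq_mul, pderiv_C,
    Derivation.mvMapCoeffs_C, Derivation.mvMapCoeffs_X, pderiv_X_self,
    pderiv_X_of_ne (show (1 : Fin 2) ≠ 0 by decide),
    pderiv_X_of_ne (show (0 : Fin 2) ≠ 1 by decide)]
  ring

end WeylPoissonBracket

/-- Let `D` be a commutative ring (with trivial Poisson bracket), `∂` a derivation of `D`
and `a ∈ D`. Then the rules `{Y,d} = ∂(d)Y`, `{X,d} = -∂(d)X` (for `d ∈ D`) and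
`{Y,X} = ∂(a)` extend to a well-defined Poisson bracket on `A = D[X,Y]/(XY - a)`:
a biadditive, antisymmetric bracket satisfying the Jacobi identity and the Leibniz
rule. This makes `A` a Poisson algebra (the generalized Weyl Poisson algebra
`D[X,Y; a, ∂}` of rank 1). -/
theorem gwa_poisson_bracket_exists (D : Type*) [CommRing D] (del : Derivation ℤ D D) (a : D) :
    ∃ B : GWA D a → GWA D a → GWA D a,
      (∀ u v w : GWA D a, B (u + v) w = B u w + B v w) ∧
      (∀ u v w : GWA D a, B u (v + w) = B u v + B u w) ∧
      (∀ u v : GWA D a, B u v = - B v u) ∧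
      (∀ u v w : GWA D a, B u (B v w) = B (B u v) w + B v (B u w)) ∧
      (∀ u v w : GWA D a, B u (v * w) = B u v * w + v * B u w) ∧
      (∀ d e : D, B (algebraMap D (GWA D a) d) (algebraMap D (GWA D a) e) = 0) ∧
      (∀ d : D, B (gwaY D a) (algebraMap D (GWA D a) d) =
        algebraMap D (GWA D a) (del d) * gwaY D a) ∧
      (∀ d : D, B (gwaX D a) (algebraMap D (GWA D a) d) =
        -(algebraMap D (GWA D a) (del d) * gwaX D a)) ∧
      B (gwaY D a) (gwaX D a) = algebraMap D (GWA D a) (del a) := by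
  have hB := isPoissonBracket_weylPoissonBracket del a
  have hI := hB.mem_span_singleton_of_casimir (weylPoissonBracket_casimir del a)
  have hBq := hB.isPoissonBracket_quotient hI
  have halg (d : D) : algebraMap D (GWA D a) d = Ideal.Quotient.mk _ (C d) := rfl
  refine ⟨hB.quotient _ hI, hBq.add_left, hBq.add_right, hBq.antisymm, hBq.jacobi, hBq.leibniz,
    fun d e => ?_, fun d => ?_, fun d => ?_, ?_⟩ <;>
  · simp only [halg, gwaX, gwaY, hB.quotient_mk, ← map_mul, ← map_neg,
      ← map_zero (Ideal.Quotient.mk _)]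
    congr 1
    simp [weylPoissonBracket, mul_comm]
end
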